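/- Let G be a chordal graph on n vertices. Then G is unmixed (all minimal vertex covers have the same cardinality) if and only if the vertex set of G is the disjoint union of those facets of the clique complex of G that admit a free vertex. -/

import Mathlib

open Finset

variable {V : Type} [Fintype V] [DecidableEq V]

/-- The closed neighborhood `N[v]` of a vertex, as a `Finset`. -/
def closedNbhd (G : SimpleGraph V) [DecidableRel G.Adj] (v : V) : Finset V :=
  insert v (G.neighborFinset v)

/-- The graph `G \ A` obtained by deleting the vertices in `A` (keeping them as
isolated vertices on the same vertex set). -/
def deleteVerts (G : SimpleGraph V) (A : Finset V) : SimpleGraph V where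
  Adj u v := G.Adj u v ∧ u ∉ A ∧ v ∉ A
  symm := ⟨fun u v h => ⟨h.1.symm, h.2.2, h.2.1⟩⟩
  loopless := ⟨fun u h => G.loopless.irrefl u h.1⟩

/-- `C` is a vertex cover of `G`. -/
def IsVertexCover (G : SimpleGraph V) (C : Finset V) : Prop :=
  ∀ ⦃u v : V⦄, G.Adj u v → u ∈ C ∨ v ∈ C

/-- `C` is a minimal vertex cover of `G`. -/
def IsMinVertexCover (G : SimpleGraph V) (C : Finset V) : Prop :=
  IsVertexCover G C ∧ ∀ D : Finset V, D ⊂ C → ¬ IsVertexCover G D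

/-- A graph is chordal if it has no induced cycle of length greater than `3`. -/
def IsChordal (G : SimpleGraph V) : Prop :=
  ∀ n : ℕ, 4 ≤ n → ∀ f : ZMod n → V, Function.Injective f →
    ¬ (∀ i j : ZMod n, G.Adj (f i) (f j) ↔ j = i + 1 ∨ i = j + 1)

/-- `S` is an independent set of `G`. -/
def IsIndepSet (G : SimpleGraph V) (S : Finset V) : Prop :=
  ∀ ⦃u : V⦄, u ∈ S → ∀ ⦃v : V⦄, v ∈ S → ¬ G.Adj u v

/-- `S` is a maximal independent set of `G`. -/
def IsMaxIndepSet (G : SimpleGraph V) (S : Finset V) : Prop :=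
  IsIndepSet G S ∧ ∀ T : Finset V, IsIndepSet G T → S ⊆ T → S = T

/-- `F` is a maximal clique of `G`, i.e. a facet of the clique complex `Δ(G)`. -/
def IsMaxCliqueF (G : SimpleGraph V) (F : Finset V) : Prop :=
  G.IsClique ↑F ∧ ∀ F' : Finset V, G.IsClique ↑F' → F ⊆ F' → F = F'

/-- `M` is an induced matching of `G`: a set of edges of `G` such that no edge of `G`
joins a vertex of one member to a vertex of a different member. -/
def IsInducedMatching (G : SimpleGraph V) (M : Finset (Sym2 V)) : Prop :=
  (∀ e ∈ M, e ∈ G.edgeSet) ∧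
    ∀ e ∈ M, ∀ f ∈ M, e ≠ f → ∀ u v : V, u ∈ e → v ∈ f → ¬ G.Adj u v

/-- The induced matching number `im(G)`. -/
noncomputable def inducedMatchingNumber (G : SimpleGraph V) : ℕ :=
  sSup {n | ∃ M : Finset (Sym2 V), IsInducedMatching G M ∧ M.card = n}

/-- The graph `G` has no edges. -/
def NoEdges (G : SimpleGraph V) : Prop := ∀ u v : V, ¬ G.Adj u v

open MvPolynomial in
/-- The squarefree monomial `∏_{v ∈ C} x_v` associated to a set of vertices. -/
noncomputable def coverMonomial (K : Type) [Field K] (C : Finset V) : MvPolynomial V K :=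
  ∏ v ∈ C, X v

open MvPolynomial in
/-- The cover ideal `J(G)`, generated by the monomials of the minimal vertex covers. -/
noncomputable def coverIdeal (K : Type) [Field K] (G : SimpleGraph V) : Ideal (MvPolynomial V K) :=
  Ideal.span {m | ∃ C : Finset V, IsMinVertexCover G C ∧ m = coverMonomial K C}

open MvPolynomial in
/-- The edge ideal `I(G)`. -/
noncomputable def edgeIdeal (K : Type) [Field K] (G : SimpleGraph V) : Ideal (MvPolynomial V K) :=
  Ideal.span {m | ∃ u v : V, G.Adj u v ∧ m = X u * X v}

open MvPolynomial in
/-- `m` is a linear quotients ordering: each successive colon ideal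
`(m_1, …, m_{i-1}) : m_i` is generated by a subset of the variables. -/
def IsLinQuotOrd {K : Type} [Field K] {ι : Type} [LinearOrder ι]
    (m : ι → MvPolynomial V K) : Prop :=
  ∀ i : ι, ∃ T : Set V,
    (Ideal.span (m '' {j | j < i})).colon (Ideal.span {m i}) =
      Ideal.span ((fun v => (X v : MvPolynomial V K)) '' T)

/-!
Minimal vertex covers are the complements of maximal independent sets, so "unmixed" means
"well-covered", and a facet of `Δ(G)` with a free vertex `w` is exactly the closed neighbourhood
`N[w]` of a simplicial vertex `w` (a *simplex*).

If the simplices partition `V`, a maximal independent set meets every simplex `N[w]` (otherwise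
it could be enlarged by `w`) and in at most one vertex, so all maximal independent sets have as
many elements as there are simplices.

Conversely, let `G` be well-covered. For non-adjacent `s ≠ t` and a maximal independent set `M`,
the set `(M \ (N[s] ∪ N[t])) ∪ {s, t}` is independent, so `M` meets `N[s] ∪ N[t]` at least twice;
this forces distinct simplices to be disjoint. That every vertex `v` lies in a simplex is proved
by induction, deleting `N[s]` for a simplicial vertex `s` (Dirac's lemma for chordal graphs):
`G - N[s]` is again well-covered, so `v` lies in a simplex `K = N[t]` of `G - N[s]`. If `v` lay in
no simplex of `G`, every vertex of the clique `K` would have a neighbour outside `K`, and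
chordality yields a maximal independent set `M` of `G` avoiding `K`; such an `M` meets
`N[s] ∪ N[t]` at most once.
-/

-- Rebinding `V` drops the instance arguments of the `variable` line above.
variable {V : Type} {G : SimpleGraph V}

def IsSimplicial (G : SimpleGraph V) (v : V) : Prop := G.IsClique (G.neighborSet v)

def IsWellCovered (G : SimpleGraph V) : Prop :=
  ∀ M N, IsMaxIndepSet G M → IsMaxIndepSet G N → M.card = N.card

theorem ZMod.eq_add_one_iff_val {n : ℕ} [Fact (1 < n)] (i j : ZMod n) :
    j = i + 1 ↔ j.val = i.val + 1 ∨ (i.val + 1 = n ∧ j.val = 0) := by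
  have hi := i.val_lt
  have hj := j.val_lt
  rw [← (ZMod.val_injective n).eq_iff, ZMod.val_add, ZMod.val_one]
  rcases Nat.lt_or_ge (i.val + 1) n with h | h
  · rw [Nat.mod_eq_of_lt h]; omega
  · rw [show i.val + 1 = n by omega, Nat.mod_self]; omega

theorem SimpleGraph.Walk.eq_add_one_of_adj_getVert {u v : V} {p : G.Walk u v}
    (hp : p.length = G.dist u v) {i j : ℕ} (hij : i ≤ j) (hj : j ≤ p.length)
    (h : G.Adj (p.getVert i) (p.getVert j)) : j = i + 1 := by
  let q := (p.drop i).take (j - i)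
  have hq : q.length = j - i := by simp [q, Walk.take_length, Walk.drop_length]; omega
  have hend : (p.drop i).getVert (j - i) = p.getVert j := by
    rw [Walk.drop_getVert, Nat.add_sub_cancel' hij]
  have hgeo := length_eq_dist_of_subwalk (p₂ := q) hp
    ((Walk.isSubwalk_take _ _).trans (Walk.isSubwalk_drop _ _))
  rw [hq, hend, dist_eq_one_iff_adj.2 h] at hgeo
  omega

/-! ### Chordal graphs -/

theorem IsChordal.false_of_inducedCycle (hG : IsChordal G) {n : ℕ} (hn : 4 ≤ n) {g : ℕ → V}
    (hinj : ∀ i < n, ∀ j < n, g i = g j → i = j)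
    (hadj : ∀ i < n, ∀ j < n,
      G.Adj (g i) (g j) ↔ j = i + 1 ∨ i = j + 1 ∨ (i = 0 ∧ j + 1 = n) ∨ (j = 0 ∧ i + 1 = n)) :
    False := by
  have : Fact (1 < n) := ⟨by omega⟩
  refine hG n hn (fun i => g i.val) (fun i j h => ZMod.val_injective n ?_) fun i j => ?_
  · exact hinj _ i.val_lt _ j.val_lt h
  · rw [hadj _ i.val_lt _ j.val_lt, ZMod.eq_add_one_iff_val, ZMod.eq_add_one_iff_val]
    omega

theorem IsChordal.adj_of_cycle4 (hG : IsChordal G) {a b c d : V} (hab : G.Adj a b)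
    (hbc : G.Adj b c) (hcd : G.Adj c d) (hda : G.Adj d a) (hac : a ≠ c) (hbd : b ≠ d)
    (hnac : ¬ G.Adj a c) : G.Adj b d := by
  by_contra hnbd
  let g : ℕ → V := fun i => if i = 0 then a else if i = 1 then b else if i = 2 then c else d
  refine hG.false_of_inducedCycle le_rfl (g := g) (fun i hi j hj h => ?_) fun i hi j hj => ?_
  · interval_cases i <;> interval_cases j <;> simp_all [g, hab.ne, hbc.ne, hcd.ne, hda.ne,
      hab.ne.symm, hbc.ne.symm, hcd.ne.symm, hda.ne.symm, hac.symm, hbd.symm]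
  · interval_cases i <;> interval_cases j <;> simp_all [g, G.adj_comm]

-- `p` closed up by the apex `a` is an induced cycle of length `p.length + 2 ≥ 4`.
theorem IsChordal.false_of_path_apex (hG : IsChordal G) {s t a : V} (p : G.Walk s t)
    (hp : p.IsPath) (hlen : 2 ≤ p.length)
    (hchord : ∀ i j, i ≤ j → j ≤ p.length → G.Adj (p.getVert i) (p.getVert j) → j = i + 1)
    (has : G.Adj a s) (hat : G.Adj a t)
    (hint : ∀ i, 0 < i → i < p.length → p.getVert i ≠ a ∧ ¬ G.Adj a (p.getVert i)) : False := by
  set k := p.length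
  have hpath : ∀ i ≤ k, ∀ j ≤ k, G.Adj (p.getVert i) (p.getVert j) ↔ j = i + 1 ∨ i = j + 1 := by
    intro i hi j hj
    refine ⟨fun h => ?_, ?_⟩
    · rcases le_total i j with hij | hji
      · exact .inl (hchord i j hij hj h)
      · exact .inr (hchord j i hji hi h.symm)
    · rintro (rfl | rfl)
      · exact p.adj_getVert_succ (by omega)
      · exact (p.adj_getVert_succ (by omega)).symm
  have hapex : ∀ j ≤ k, G.Adj a (p.getVert j) ↔ j = 0 ∨ j = k := by
    intro j hj
    refine ⟨fun h => ?_, ?_⟩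
    · by_contra hj'
      exact (hint j (by omega) (by omega)).2 h
    · rintro (rfl | rfl)
      · simpa using has
      · simpa [k] using hat
  have hne : ∀ j ≤ k, p.getVert j ≠ a := by
    intro j hj
    by_cases hj' : j = 0 ∨ j = k
    · rintro rfl
      exact G.irrefl ((hapex j hj).2 hj')
    · exact (hint j (by omega) (by omega)).1
  let g : ℕ → V := fun i => if i ≤ k then p.getVert i else a
  refine hG.false_of_inducedCycle (n := k + 2) (by omega) (g := g) (fun i hi j hj h => ?_)
    fun i hi j hj => ?_
  · by_cases hik : i ≤ k <;> by_cases hjk : j ≤ k <;>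
      simp only [g, hik, hjk, if_true, if_false] at h
    · exact hp.getVert_injOn hik hjk h
    · exact absurd h (hne i hik)
    · exact absurd h.symm (hne j hjk)
    · omega
  · by_cases hik : i ≤ k <;> by_cases hjk : j ≤ k <;> simp only [g, hik, hjk, if_true, if_false]
    · rw [hpath i hik j hjk]; omega
    · rw [G.adj_comm, hapex i hik]; omega
    · rw [hapex j hjk]; omega
    · obtain rfl : i = k + 1 := by omega
      obtain rfl : j = k + 1 := by omega
      simp

theorem deleteVerts_le (A : Finset V) : deleteVerts G A ≤ G := fun _ _ h => h.1

theorem deleteVerts_anti {A B : Finset V} (h : A ⊆ B) : deleteVerts G B ≤ deleteVerts G A :=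
  fun _ _ huv => ⟨huv.1, fun hu => huv.2.1 (h hu), fun hv => huv.2.2 (h hv)⟩

theorem reachable_deleteVerts_eq_or {A : Finset V} {c x : V}
    (h : (deleteVerts G A).Reachable c x) : x = c ∨ x ∉ A ∧ ∃ y, G.Adj x y := by
  obtain ⟨p⟩ := h.symm
  cases p with
  | nil => exact .inl rfl
  | cons h _ => exact .inr ⟨h.2.1, _, h.1⟩

theorem isChordal_deleteVerts (hG : IsChordal G) (A : Finset V) : IsChordal (deleteVerts G A) :=
  fun n hn f hf hcyc => hG n hn f hf fun i j =>
    ⟨fun h => (hcyc i j).1 ⟨h, ((hcyc i (i + 1)).2 (.inl rfl)).2.1,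
      ((hcyc j (j + 1)).2 (.inl rfl)).2.1⟩, fun h => ((hcyc i j).2 h).1⟩

theorem IsSimplicial.of_deleteVerts {A : Finset V} {s : V} (hA : ∀ u, G.Adj s u → u ∉ A)
    (hsA : s ∉ A) (hs : IsSimplicial (deleteVerts G A) s) : IsSimplicial G s :=
  fun _ hu _ hw huw => (hs ⟨hu, hsA, hA _ hu⟩ ⟨hw, hsA, hA _ hw⟩ huw).1

/-! ### Independent sets -/

theorem IsIndepSet.empty : IsIndepSet G ∅ := fun _ hu => absurd hu (Finset.notMem_empty _)

theorem IsIndepSet.mono {M N : Finset V} (hM : IsIndepSet G M) (h : N ⊆ M) : IsIndepSet G N :=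
  fun _ hu _ hv => hM (h hu) (h hv)

theorem IsIndepSet.eq_of_mem_clique {M K : Finset V} (hM : IsIndepSet G M) (hK : G.IsClique ↑K)
    {x y : V} (hxM : x ∈ M) (hyM : y ∈ M) (hxK : x ∈ K) (hyK : y ∈ K) : x = y := by
  by_contra hxy
  exact hM hxM hyM (hK hxK hyK hxy)

section

variable [DecidableEq V]

open scoped Classical

theorem IsIndepSet.insert {M : Finset V} {x : V} (hM : IsIndepSet G M)
    (hx : ∀ m ∈ M, ¬ G.Adj x m) : IsIndepSet G (insert x M) := by
  intro u hu w hw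
  rw [Finset.mem_insert] at hu hw
  rcases hu with rfl | hu <;> rcases hw with rfl | hw
  · exact G.irrefl
  · exact hx w hw
  · exact fun h => hx u hu h.symm
  · exact hM hu hw

theorem isMaxIndepSet_iff {M : Finset V} :
    IsMaxIndepSet G M ↔ IsIndepSet G M ∧ ∀ x ∉ M, ∃ m ∈ M, G.Adj x m := by
  refine ⟨fun hM => ⟨hM.1, fun x hx => ?_⟩, fun hM => ⟨hM.1, fun T hT hMT => ?_⟩⟩
  · by_contra! h
    exact hx ((hM.2 _ (hM.1.insert h) (Finset.subset_insert x M)).symm ▸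
      Finset.mem_insert_self x M)
  · refine hMT.antisymm fun x hxT => ?_
    by_contra hxM
    obtain ⟨m, hm, hxm⟩ := hM.2 x hxM
    exact hT hxT (hMT hm) hxm

theorem exists_isIndepSet_dominating {I Y : Finset V} (hI : IsIndepSet G I) (hIY : I ⊆ Y) :
    ∃ M, I ⊆ M ∧ M ⊆ Y ∧ IsIndepSet G M ∧ ∀ y ∈ Y, y ∉ M → ∃ m ∈ M, G.Adj y m := by
  obtain ⟨M, hM, hmax⟩ := (Y.powerset.filter fun M => I ⊆ M ∧ IsIndepSet G M).exists_max_image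
    Finset.card ⟨I, by simp [hIY, hI]⟩
  simp only [Finset.mem_filter, Finset.mem_powerset] at hM hmax
  refine ⟨M, hM.2.1, hM.1, hM.2.2, fun y hy hyM => ?_⟩
  by_contra! h
  have := hmax (insert y M) ⟨Finset.insert_subset hy hM.1,
    hM.2.1.trans (Finset.subset_insert y M), hM.2.2.insert h⟩
  rw [Finset.card_insert_of_notMem hyM] at this
  omega

-- The `K`-neighbourhoods of adjacent vertices outside `K` are nested: otherwise they would
-- close an induced 4-cycle through `K`.
theorem IsChordal.subset_or_subset_of_adj (hG : IsChordal G) {K : Finset V}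
    (hK : G.IsClique ↑K) {y z : V} (hy : y ∉ K) (hz : z ∉ K) (hyz : G.Adj y z) :
    K.filter (G.Adj y) ⊆ K.filter (G.Adj z) ∨ K.filter (G.Adj z) ⊆ K.filter (G.Adj y) := by
  by_contra! h
  obtain ⟨x, hx, hzx⟩ := Finset.not_subset.1 h.1
  obtain ⟨w, hw, hyw⟩ := Finset.not_subset.1 h.2
  rw [Finset.mem_filter] at hx hw
  have hxw : x ≠ w := by rintro rfl; exact hyw (Finset.mem_filter.2 hx)
  have hxz := hG.adj_of_cycle4 hx.2 (hK hx.1 hw.1 hxw) hw.2.symm hyz.symm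
    (by rintro rfl; exact hy hw.1) (by rintro rfl; exact hz hx.1)
    fun h => hyw (Finset.mem_filter.2 ⟨hw.1, h⟩)
  exact hzx (Finset.mem_filter.2 ⟨hx.1, hxz.symm⟩)

variable [Fintype V]

theorem exists_isMaxIndepSet_superset {I : Finset V} (hI : IsIndepSet G I) :
    ∃ M, IsMaxIndepSet G M ∧ I ⊆ M := by
  obtain ⟨M, hIM, -, hM, hdom⟩ := exists_isIndepSet_dominating hI (Finset.subset_univ I)
  exact ⟨M, isMaxIndepSet_iff.2 ⟨hM, fun x hx => hdom x (Finset.mem_univ x) hx⟩, hIM⟩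

-- The vertices outside `K` whose `K`-neighbourhood is maximal dominate `K`, and adjacent ones
-- have the same `K`-neighbourhood; so any maximal independent subset of them still dominates `K`.
theorem IsChordal.exists_isMaxIndepSet_disjoint (hG : IsChordal G) {K : Finset V}
    (hK : G.IsClique ↑K) (hout : ∀ x ∈ K, ∃ z, G.Adj x z ∧ z ∉ K) :
    ∃ M, IsMaxIndepSet G M ∧ ∀ x ∈ K, x ∉ M := by
  let nK : V → Finset V := fun y => K.filter (G.Adj y)
  let Y := Finset.univ.filter fun y => y ∉ K ∧ ∀ z ∉ K, nK y ⊆ nK z → nK z ⊆ nK y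
  have hdom : ∀ x ∈ K, ∃ y ∈ Y, G.Adj x y := by
    intro x hx
    obtain ⟨z, hxz, hzK⟩ := hout x hx
    obtain ⟨y, hy, hmax⟩ := (Finset.univ.filter fun y => y ∉ K ∧ nK z ⊆ nK y).exists_max_image
      (fun y => (nK y).card) ⟨z, by simp [hzK]⟩
    simp only [Finset.mem_filter, Finset.mem_univ, true_and] at hy hmax
    refine ⟨y, Finset.mem_filter.2 ⟨Finset.mem_univ y, hy.1, fun z' hz' hyz' =>
      (Finset.eq_of_subset_of_card_le hyz' (hmax z' ⟨hz', hy.2.trans hyz'⟩)).symm.subset⟩, ?_⟩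
    exact ((Finset.mem_filter.1 (hy.2 (Finset.mem_filter.2 ⟨hx, hxz.symm⟩))).2).symm
  have hYadj : ∀ y ∈ Y, ∀ z ∈ Y, G.Adj y z → nK y = nK z := by
    intro y hy z hz hyz
    simp only [Y, Finset.mem_filter, Finset.mem_univ, true_and] at hy hz
    rcases hG.subset_or_subset_of_adj hK hy.1 hz.1 hyz with h | h
    exacts [h.antisymm (hy.2 z hz.1 h), (hz.2 y hy.1 h).antisymm h]
  obtain ⟨I, -, hIY, hI, hIdom⟩ := exists_isIndepSet_dominating (G := G) IsIndepSet.empty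
    (Finset.empty_subset Y)
  obtain ⟨M, hM, hIM⟩ := exists_isMaxIndepSet_superset hI
  refine ⟨M, hM, fun x hx hxM => ?_⟩
  obtain ⟨y, hyY, hxy⟩ := hdom x hx
  obtain ⟨m, hmI, hxm⟩ : ∃ m ∈ I, G.Adj x m := by
    by_cases hyI : y ∈ I
    · exact ⟨y, hyI, hxy⟩
    obtain ⟨m, hmI, hym⟩ := hIdom y hyY hyI
    have : x ∈ nK m := hYadj y hyY m (hIY hmI) hym ▸ Finset.mem_filter.2 ⟨hx, hxy.symm⟩
    exact ⟨m, hmI, (Finset.mem_filter.1 this).2.symm⟩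
  exact hM.1 hxM (hIM hmI) hxm

theorem isVertexCover_iff_isIndepSet_compl {C : Finset V} :
    IsVertexCover G C ↔ IsIndepSet G Cᶜ := by
  refine ⟨fun h u hu v hv huv => ?_, fun h u v huv => ?_⟩
  · rcases h huv with hu' | hv'
    exacts [Finset.mem_compl.1 hu hu', Finset.mem_compl.1 hv hv']
  · by_contra! huv'
    exact h (Finset.mem_compl.2 huv'.1) (Finset.mem_compl.2 huv'.2) huv

theorem isMinVertexCover_iff_isMaxIndepSet_compl {C : Finset V} :
    IsMinVertexCover G C ↔ IsMaxIndepSet G Cᶜ := by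
  rw [IsMinVertexCover, IsMaxIndepSet, isVertexCover_iff_isIndepSet_compl]
  refine and_congr_right fun _ => ⟨fun h T hT hCT => ?_, fun h D hDC hD => ?_⟩
  · by_contra hne
    refine h Tᶜ (compl_compl C ▸ compl_lt_compl_iff_lt.2 (hCT.lt_of_ne hne)) ?_
    rwa [isVertexCover_iff_isIndepSet_compl, compl_compl]
  · have := h Dᶜ (isVertexCover_iff_isIndepSet_compl.1 hD) (compl_le_compl hDC.le)
    exact hDC.ne (compl_injective this).symm

theorem unmixed_iff_isWellCovered :
    (∀ C D : Finset V, IsMinVertexCover G C → IsMinVertexCover G D → C.card = D.card) ↔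
      IsWellCovered G := by
  simp only [isMinVertexCover_iff_isMaxIndepSet_compl]
  refine ⟨fun h M N hM hN => ?_, fun h C D hC hD => ?_⟩
  · have := h Mᶜ Nᶜ (by rwa [compl_compl]) (by rwa [compl_compl])
    rw [Finset.card_compl, Finset.card_compl] at this
    have := M.card_le_univ
    have := N.card_le_univ
    omega
  · have := h _ _ hC hD
    rw [Finset.card_compl, Finset.card_compl] at this
    have := C.card_le_univ
    have := D.card_le_univ
    omega

/-! ### Closed neighbourhoods and simplices -/

theorem mem_closedNbhd {u v : V} : u ∈ closedNbhd G v ↔ u = v ∨ G.Adj v u := by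
  simp [closedNbhd]

theorem self_mem_closedNbhd (v : V) : v ∈ closedNbhd G v := mem_closedNbhd.2 (.inl rfl)

theorem IsMaxIndepSet.exists_mem_closedNbhd {M : Finset V} (hM : IsMaxIndepSet G M) (w : V) :
    ∃ m ∈ M, m ∈ closedNbhd G w := by
  by_cases hw : w ∈ M
  · exact ⟨w, hw, self_mem_closedNbhd w⟩
  · obtain ⟨m, hm, hwm⟩ := (isMaxIndepSet_iff.1 hM).2 w hw
    exact ⟨m, hm, mem_closedNbhd.2 (.inr hwm)⟩

theorem subset_closedNbhd_of_isClique {F : Finset V} (hF : G.IsClique ↑F) {s : V} (hs : s ∈ F) :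
    F ⊆ closedNbhd G s := fun x hx => mem_closedNbhd.2 <| (eq_or_ne x s).imp id fun h =>
  hF hs hx h.symm

theorem IsSimplicial.isClique_closedNbhd {s : V} (hs : IsSimplicial G s) :
    G.IsClique ↑(closedNbhd G s) := by
  intro x hx y hy hxy
  rcases mem_closedNbhd.1 hx with rfl | hx <;> rcases mem_closedNbhd.1 hy with rfl | hy
  exacts [absurd rfl hxy, hy, hx.symm, hs hx hy hxy]

theorem IsSimplicial.isMaxCliqueF_closedNbhd {s : V} (hs : IsSimplicial G s) :
    IsMaxCliqueF G (closedNbhd G s) :=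
  ⟨hs.isClique_closedNbhd, fun _ hF hsub =>
    hsub.antisymm (subset_closedNbhd_of_isClique hF (hsub (self_mem_closedNbhd s)))⟩

theorem IsSimplicial.eq_closedNbhd {s : V} (hs : IsSimplicial G s) {F : Finset V}
    (hF : IsMaxCliqueF G F) (hsF : s ∈ F) : F = closedNbhd G s :=
  hF.2 _ hs.isClique_closedNbhd (subset_closedNbhd_of_isClique hF.1 hsF)

theorem exists_isMaxCliqueF_superset {C : Finset V} (hC : G.IsClique ↑C) :
    ∃ F, IsMaxCliqueF G F ∧ C ⊆ F := by
  obtain ⟨F, hF, hmax⟩ := (Finset.univ.filter fun F : Finset V => G.IsClique ↑F ∧ C ⊆ F)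
    |>.exists_max_image Finset.card ⟨C, by simp [hC]⟩
  simp only [Finset.mem_filter, Finset.mem_univ, true_and] at hF hmax
  exact ⟨F, ⟨hF.1, fun F' hF' hFF' =>
    Finset.eq_of_subset_of_card_le hFF' (hmax F' ⟨hF', hF.2.trans hFF'⟩)⟩, hF.2⟩

theorem isMaxCliqueF_with_free_vertex_iff {F : Finset V} :
    (IsMaxCliqueF G F ∧ ∃ w ∈ F, ∀ F', IsMaxCliqueF G F' → w ∈ F' → F' = F) ↔
      ∃ w, IsSimplicial G w ∧ closedNbhd G w = F := by
  refine ⟨fun ⟨hF, w, hwF, hfree⟩ => ?_, fun ⟨w, hw, hF⟩ => ?_⟩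
  · have hsub : closedNbhd G w ⊆ F := fun u hu => by
      rcases mem_closedNbhd.1 hu with rfl | hwu
      · exact hwF
      have hpair : G.IsClique ↑({w, u} : Finset V) := by
        rw [Finset.coe_pair]
        exact SimpleGraph.isClique_pair.2 fun _ => hwu
      obtain ⟨F', hF', hwuF'⟩ := exists_isMaxCliqueF_superset hpair
      exact hfree F' hF' (hwuF' (by simp)) ▸ hwuF' (by simp)
    have hFw : F = closedNbhd G w := hsub.antisymm' (subset_closedNbhd_of_isClique hF.1 hwF)
    refine ⟨w, fun x hx y hy hxy => hF.1 ?_ ?_ hxy, hFw.symm⟩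
    exacts [hsub (mem_closedNbhd.2 (.inr hx)), hsub (mem_closedNbhd.2 (.inr hy))]
  · subst hF
    exact ⟨hw.isMaxCliqueF_closedNbhd, w, self_mem_closedNbhd w, fun F' hF' hwF' =>
      hw.eq_closedNbhd hF' hwF'⟩

/-! ### Dirac's lemma -/

theorem isClique_or_exists_not_adj {C W : Finset V} (hS : G.IsClique ↑(W \ C)) :
    G.IsClique ↑W ∨ ∃ x ∈ W, ∃ y ∈ C, x ≠ y ∧ ¬ G.Adj x y ∧ W \ C ⊆ closedNbhd G x := by
  by_contra! h
  obtain ⟨hW, hsplit⟩ := h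
  have hSC : ∀ z ∈ W \ C, ∀ y ∈ C, z ≠ y → G.Adj z y := by
    intro z hz y hy hzy
    by_contra hzy'
    obtain ⟨z', hz', hz'N⟩ :=
      Finset.not_subset.1 (hsplit z (Finset.sdiff_subset hz) y hy hzy hzy')
    rcases eq_or_ne z' z with rfl | hne
    · exact hz'N (self_mem_closedNbhd z')
    · exact hz'N (mem_closedNbhd.2 (.inr (hS hz hz' hne.symm)))
  refine hW fun x hx y hy hxy => ?_
  by_cases hxC : x ∈ C <;> by_cases hyC : y ∈ C
  · by_contra hxy'
    refine hsplit x hx y hyC hxy hxy' fun z hz => mem_closedNbhd.2 (.inr ?_)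
    exact (hSC z hz x hxC fun h => (Finset.mem_sdiff.1 hz).2 (h ▸ hxC)).symm
  · exact (hSC y (Finset.mem_sdiff.2 ⟨hy, hyC⟩) x hxC hxy.symm).symm
  · exact hSC x (Finset.mem_sdiff.2 ⟨hx, hxC⟩) y hyC hxy
  · exact hS (Finset.mem_sdiff.2 ⟨hx, hxC⟩) (Finset.mem_sdiff.2 ⟨hy, hyC⟩) hxy

-- A shortest `s`-`t` path avoiding the rest of `N[a]` would close an induced cycle through `a`.
theorem IsChordal.adj_of_reachable (hG : IsChordal G) {a s t : V} (has : G.Adj a s)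
    (hat : G.Adj a t) (hst : s ≠ t)
    (hr : (deleteVerts G (closedNbhd G a \ {s, t})).Reachable s t) : G.Adj s t := by
  by_contra hnst
  obtain ⟨p, hp⟩ := hr.exists_walk_length_eq_dist
  have hpath : p.IsPath := p.isPath_of_length_eq_dist hp
  have hlen : 2 ≤ p.length := hp ▸ hr.one_lt_dist_of_ne_of_not_adj hst fun h => hnst h.1
  have hlive : ∀ i ≤ p.length, p.getVert i ∉ closedNbhd G a \ {s, t} := by
    intro i hi
    rcases hi.lt_or_eq with hi | rfl
    · exact (p.adj_getVert_succ hi).2.1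
    · simp
  refine hG.false_of_path_apex (p.mapLe (deleteVerts_le _)) (hpath.mapLe _) (by simpa using hlen)
    (fun i j hij hj h => ?_) has hat fun i hi0 hi => ?_
  · simp only [SimpleGraph.Walk.length_map, SimpleGraph.Walk.getVert_map,
      SimpleGraph.Hom.coe_ofLE, id] at hj h
    exact p.eq_add_one_of_adj_getVert hp hij hj ⟨h, hlive i (by omega), hlive j hj⟩
  · simp only [SimpleGraph.Walk.length_map, SimpleGraph.Walk.getVert_map,
      SimpleGraph.Hom.coe_ofLE, id] at hi ⊢
    have hs : p.getVert i ≠ s := fun h => absurd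
      (hpath.getVert_injOn (by simp; omega) (by simp) (h.trans p.getVert_zero.symm)) (by omega)
    have ht : p.getVert i ≠ t := fun h => absurd
      (hpath.getVert_injOn (by simp; omega) (by simp) (h.trans p.getVert_length.symm)) (by omega)
    simpa [mem_closedNbhd, hs, ht, not_or] using hlive i hi.le

noncomputable def outerComponent (G : SimpleGraph V) (a c : V) : Finset V :=
  Finset.univ.filter ((deleteVerts G (closedNbhd G a)).Reachable c)

theorem mem_outerComponent {a c x : V} :
    x ∈ outerComponent G a c ↔ (deleteVerts G (closedNbhd G a)).Reachable c x := by
  simp [outerComponent]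

theorem notMem_closedNbhd_of_mem_outerComponent {a c x : V} (hc : c ∉ closedNbhd G a)
    (hx : x ∈ outerComponent G a c) : x ∉ closedNbhd G a := by
  rcases reachable_deleteVerts_eq_or (mem_outerComponent.1 hx) with rfl | h
  exacts [hc, h.1]

theorem biUnion_outerComponent_subset {W : Finset V} (hW : ∀ x y, G.Adj x y → x ∈ W) {a c : V}
    (hc : c ∈ W) : (outerComponent G a c).biUnion (closedNbhd G) ⊆ W := by
  intro z hz
  obtain ⟨x, hxC, hzx⟩ := Finset.mem_biUnion.1 hz
  rcases mem_closedNbhd.1 hzx with rfl | hxz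
  · rcases reachable_deleteVerts_eq_or (mem_outerComponent.1 hxC) with rfl | ⟨-, w, hw⟩
    exacts [hc, hW _ _ hw]
  · exact hW _ _ hxz.symm

theorem notMem_biUnion_outerComponent {a c : V} (hc : c ∉ closedNbhd G a) :
    a ∉ (outerComponent G a c).biUnion (closedNbhd G) := by
  intro ha
  obtain ⟨x, hxC, hax⟩ := Finset.mem_biUnion.1 ha
  have hx := notMem_closedNbhd_of_mem_outerComponent hc hxC
  rcases mem_closedNbhd.1 hax with rfl | hxa
  exacts [hx (self_mem_closedNbhd a), hx (mem_closedNbhd.2 (.inr hxa.symm))]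

theorem adj_of_mem_boundary {a c z : V} (hc : c ∉ closedNbhd G a)
    (hz : z ∈ (outerComponent G a c).biUnion (closedNbhd G) \ outerComponent G a c) :
    G.Adj a z ∧ ∃ x ∈ outerComponent G a c, G.Adj x z := by
  obtain ⟨hz, hzC⟩ := Finset.mem_sdiff.1 hz
  obtain ⟨x, hxC, hzx⟩ := Finset.mem_biUnion.1 hz
  have hxz : G.Adj x z := (mem_closedNbhd.1 hzx).resolve_left fun h => hzC (h ▸ hxC)
  have hxa := notMem_closedNbhd_of_mem_outerComponent hc hxC
  refine ⟨?_, x, hxC, hxz⟩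
  by_contra haz
  have hza : z ∉ closedNbhd G a := fun h => (mem_closedNbhd.1 h).elim
    (fun hza => hxa (mem_closedNbhd.2 (.inr (hza ▸ hxz).symm))) haz
  exact hzC (mem_outerComponent.2
    ((mem_outerComponent.1 hxC).trans (SimpleGraph.Adj.reachable ⟨hxz, hxa, hza⟩)))

theorem IsChordal.isClique_boundary (hG : IsChordal G) {a c : V} (hc : c ∉ closedNbhd G a) :
    G.IsClique ↑((outerComponent G a c).biUnion (closedNbhd G) \ outerComponent G a c) := by
  intro z₁ hz₁ z₂ hz₂ hne
  obtain ⟨ha₁, x₁, hx₁, h₁⟩ := adj_of_mem_boundary hc hz₁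
  obtain ⟨ha₂, x₂, hx₂, h₂⟩ := adj_of_mem_boundary hc hz₂
  have hC : ∀ x ∈ outerComponent G a c, x ∉ closedNbhd G a \ {z₁, z₂} := fun x hx h =>
    notMem_closedNbhd_of_mem_outerComponent hc hx (Finset.mem_sdiff.1 h).1
  have hz : ∀ z ∈ ({z₁, z₂} : Finset V), z ∉ closedNbhd G a \ {z₁, z₂} := by simp
  have e₁ : (deleteVerts G (closedNbhd G a \ {z₁, z₂})).Adj z₁ x₁ :=
    ⟨h₁.symm, hz z₁ (by simp), hC x₁ hx₁⟩
  have e₂ : (deleteVerts G (closedNbhd G a \ {z₁, z₂})).Adj x₂ z₂ :=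
    ⟨h₂, hC x₂ hx₂, hz z₂ (by simp)⟩
  have hlink : (deleteVerts G (closedNbhd G a \ {z₁, z₂})).Reachable x₁ x₂ :=
    ((mem_outerComponent.1 hx₁).symm.trans (mem_outerComponent.1 hx₂)).mono
      (deleteVerts_anti Finset.sdiff_subset)
  exact hG.adj_of_reachable ha₁ ha₂ hne (e₁.reachable.trans (hlink.trans e₂.reachable))

-- `W` is the induction measure. With `C` the component of `c` in `G - N[a]`, the vertices of
-- `N[C] \ C` are neighbours of `a` and form a clique; either `c` is simplicial, or the statement
-- for `G` restricted to `N[C]`, a set missing `a`, yields a simplicial vertex inside `C`.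
theorem IsChordal.exists_simplicial_notMem_closedNbhd (hG : IsChordal G) (W : Finset V)
    (hW : ∀ x y, G.Adj x y → x ∈ W) {a c : V} (ha : a ∈ W) (hc : c ∈ W)
    (hca : c ∉ closedNbhd G a) : ∃ s ∈ W, s ∉ closedNbhd G a ∧ IsSimplicial G s := by
  induction W using Finset.strongInduction generalizing G a c with
  | H W ih =>
  set C := outerComponent G a c
  set W' := C.biUnion (closedNbhd G)
  have hCW' : C ⊆ W' := fun x hx => Finset.mem_biUnion.2 ⟨x, hx, self_mem_closedNbhd x⟩
  have hnbr : ∀ x ∈ C, ∀ z, G.Adj x z → z ∈ W' := fun x hx z hz =>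
    Finset.mem_biUnion.2 ⟨x, hx, mem_closedNbhd.2 (.inr hz)⟩
  have hcC : c ∈ C := mem_outerComponent.2 (SimpleGraph.Reachable.refl c)
  rcases isClique_or_exists_not_adj (hG.isClique_boundary hca) with
    hW' | ⟨x, hx, y, hy, hxy, hnxy, hsub⟩
  · exact ⟨c, hc, hca, fun u hu w hw huw => hW' (hnbr c hcC u hu) (hnbr c hcC w hw) huw⟩
  have hW'W : W' ⊆ W := biUnion_outerComponent_subset hW hc
  have haW' : a ∉ W' := notMem_biUnion_outerComponent hca
  have hlt : W' ⊂ W := Finset.ssubset_iff_subset_ne.2 ⟨hW'W, fun h => haW' (h ▸ ha)⟩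
  have hyx : y ∉ closedNbhd (deleteVerts G W'ᶜ) x := by
    simp only [mem_closedNbhd, not_or]
    exact ⟨hxy.symm, fun h => hnxy h.1⟩
  obtain ⟨s, hsW', hsx, hs⟩ := ih W' hlt (isChordal_deleteVerts hG _)
    (fun u w huw => Finset.notMem_compl.1 huw.2.1) hx (hCW' hy) hyx
  have hsC : s ∈ C := by
    by_contra hsC
    rcases mem_closedNbhd.1 (hsub (Finset.mem_sdiff.2 ⟨hsW', hsC⟩)) with rfl | hxs
    · exact hsx (self_mem_closedNbhd s)
    · exact hsx (mem_closedNbhd.2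
        (.inr ⟨hxs, Finset.notMem_compl.2 hx, Finset.notMem_compl.2 hsW'⟩))
  refine ⟨s, hW'W hsW', notMem_closedNbhd_of_mem_outerComponent hca hsC,
    hs.of_deleteVerts (fun u hu => ?_) (Finset.notMem_compl.2 hsW')⟩
  exact Finset.notMem_compl.2 (hnbr s hsC u hu)

theorem IsChordal.exists_simplicial_mem (hG : IsChordal G) {W : Finset V}
    (hW : ∀ x y, G.Adj x y → x ∈ W) (hne : W.Nonempty) : ∃ s ∈ W, IsSimplicial G s := by
  by_cases hclq : G.IsClique ↑W
  · obtain ⟨w, hw⟩ := hne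
    exact ⟨w, hw, fun u hu v hv huv => hclq (hW _ _ hu.symm) (hW _ _ hv.symm) huv⟩
  obtain ⟨a, ha, c, hc, hac, hnac⟩ : ∃ a ∈ W, ∃ c ∈ W, a ≠ c ∧ ¬ G.Adj a c := by
    simpa [SimpleGraph.IsClique, Set.Pairwise] using hclq
  obtain ⟨s, hs, -, hsimp⟩ := hG.exists_simplicial_notMem_closedNbhd W hW ha hc
    (by simp [mem_closedNbhd, hac.symm, hnac])
  exact ⟨s, hs, hsimp⟩

/-! ### Well-covered graphs -/

theorem IsWellCovered.two_le_card_inter (hG : IsWellCovered G) {M : Finset V}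
    (hM : IsMaxIndepSet G M) {s t : V} (hst : s ≠ t) (hnst : ¬ G.Adj s t) :
    2 ≤ (M ∩ (closedNbhd G s ∪ closedNbhd G t)).card := by
  set X := closedNbhd G s ∪ closedNbhd G t
  have hsX : s ∈ X := Finset.mem_union_left _ (self_mem_closedNbhd s)
  have htX : t ∈ X := Finset.mem_union_right _ (self_mem_closedNbhd t)
  have hout : ∀ m ∈ M \ X, m ∉ closedNbhd G s ∧ m ∉ closedNbhd G t := fun m hm => by
    simpa [X, not_or] using (Finset.mem_sdiff.1 hm).2
  have hI : IsIndepSet G (insert s (insert t (M \ X))) := by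
    refine ((hM.1.mono Finset.sdiff_subset).insert fun m hm htm => ?_).insert fun m hm hsm => ?_
    · exact (hout m hm).2 (mem_closedNbhd.2 (.inr htm))
    · rcases Finset.mem_insert.1 hm with rfl | hm
      exacts [hnst hsm, (hout m hm).1 (mem_closedNbhd.2 (.inr hsm))]
  obtain ⟨M₂, hM₂, hsub⟩ := exists_isMaxIndepSet_superset hI
  have hcard : (insert s (insert t (M \ X))).card = (M \ X).card + 2 := by
    rw [Finset.card_insert_of_notMem, Finset.card_insert_of_notMem]
    · exact fun h => (Finset.mem_sdiff.1 h).2 htX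
    · simp [hst, hsX]
  have := Finset.card_le_card hsub
  have := hG M₂ M hM₂ hM
  have := Finset.card_sdiff_add_card_inter M X
  omega

theorem IsWellCovered.closedNbhd_eq (hwc : IsWellCovered G) {s t v : V} (hs : IsSimplicial G s)
    (ht : IsSimplicial G t) (hvs : v ∈ closedNbhd G s) (hvt : v ∈ closedNbhd G t) :
    closedNbhd G s = closedNbhd G t := by
  by_cases hst : s = t ∨ G.Adj s t
  · rcases hst with rfl | hst
    · rfl
    · exact ht.eq_closedNbhd hs.isMaxCliqueF_closedNbhd (mem_closedNbhd.2 (.inr hst))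
  rw [not_or] at hst
  obtain ⟨M, hM, hvM⟩ := exists_isMaxIndepSet_superset
    (IsIndepSet.empty.insert (G := G) (x := v) fun m hm => absurd hm (Finset.notMem_empty m))
  have hv : ∀ x ∈ M ∩ (closedNbhd G s ∪ closedNbhd G t), x = v := by
    intro x hx
    obtain ⟨hxM, hx⟩ := Finset.mem_inter.1 hx
    have hvM := hvM (Finset.mem_insert_self v ∅)
    rcases Finset.mem_union.1 hx with hx | hx
    exacts [hM.1.eq_of_mem_clique hs.isClique_closedNbhd hxM hvM hx hvs,
      hM.1.eq_of_mem_clique ht.isClique_closedNbhd hxM hvM hx hvt]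
  have := hwc.two_le_card_inter hM hst.1 hst.2
  have := Finset.card_le_one.2 fun x hx y hy => (hv x hx).trans (hv y hy).symm
  omega

theorem isWellCovered_of_existsUnique
    (h : ∀ v, ∃! F, (∃ w, IsSimplicial G w ∧ closedNbhd G w = F) ∧ v ∈ F) : IsWellCovered G := by
  set 𝒮 := Finset.univ.filter fun F : Finset V => ∃ w, IsSimplicial G w ∧ closedNbhd G w = F
  suffices H : ∀ M, IsMaxIndepSet G M → M.card = 𝒮.card from
    fun M N hM hN => (H M hM).trans (H N hN).symm
  intro M hM
  choose F hF hFuniq using h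
  refine Finset.card_bij (fun m _ => F m) (fun m _ => by simpa [𝒮] using (hF m).1)
    (fun m₁ hm₁ m₂ hm₂ heq => ?_) fun S hS => ?_
  · obtain ⟨w, hw, hwF⟩ := (hF m₁).1
    exact hM.1.eq_of_mem_clique (hwF ▸ hw.isClique_closedNbhd) hm₁ hm₂ (hF m₁).2
      (heq ▸ (hF m₂).2)
  · obtain ⟨w, hw, rfl⟩ := (Finset.mem_filter.1 hS).2
    obtain ⟨m, hm, hmw⟩ := hM.exists_mem_closedNbhd w
    exact ⟨m, hm, (hFuniq m _ ⟨⟨w, hw, rfl⟩, hmw⟩).symm⟩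

theorem IsMaxIndepSet.of_deleteVerts_closedNbhd {s : V} {M : Finset V}
    (hM : IsMaxIndepSet (deleteVerts G (closedNbhd G s)) M) :
    closedNbhd G s ⊆ M ∧ IsMaxIndepSet G (insert s (M \ closedNbhd G s)) := by
  obtain ⟨hind, hdom⟩ := isMaxIndepSet_iff.1 hM
  have hNM : closedNbhd G s ⊆ M := fun x hx => by
    by_contra hxM
    obtain ⟨m, -, hxm⟩ := hdom x hxM
    exact hxm.2.1 hx
  refine ⟨hNM, isMaxIndepSet_iff.2 ⟨?_, fun x hx => ?_⟩⟩
  · refine IsIndepSet.insert (fun u hu w hw huw => ?_) fun m hm hsm => ?_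
    · exact hind (Finset.mem_sdiff.1 hu).1 (Finset.mem_sdiff.1 hw).1
        ⟨huw, (Finset.mem_sdiff.1 hu).2, (Finset.mem_sdiff.1 hw).2⟩
    · exact (Finset.mem_sdiff.1 hm).2 (mem_closedNbhd.2 (.inr hsm))
  · rw [Finset.mem_insert, Finset.mem_sdiff, not_or, not_and_or, not_not] at hx
    by_cases hxN : x ∈ closedNbhd G s
    · exact ⟨s, Finset.mem_insert_self _ _, ((mem_closedNbhd.1 hxN).resolve_left hx.1).symm⟩
    · obtain ⟨m, hm, hxm⟩ := hdom x (hx.2.resolve_right hxN)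
      exact ⟨m, Finset.mem_insert_of_mem (Finset.mem_sdiff.2 ⟨hm, hxm.2.2⟩), hxm.1⟩

theorem IsWellCovered.deleteVerts_closedNbhd (hG : IsWellCovered G) (s : V) :
    IsWellCovered (deleteVerts G (closedNbhd G s)) := by
  have hcard : ∀ M, closedNbhd G s ⊆ M →
      (insert s (M \ closedNbhd G s)).card + (closedNbhd G s).card = M.card + 1 := by
    intro M hNM
    rw [Finset.card_insert_of_notMem fun h => (Finset.mem_sdiff.1 h).2 (self_mem_closedNbhd s)]
    have := Finset.card_sdiff_add_card_eq_card hNM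
    omega
  intro M₁ M₂ hM₁ hM₂
  obtain ⟨h₁, hG₁⟩ := hM₁.of_deleteVerts_closedNbhd
  obtain ⟨h₂, hG₂⟩ := hM₂.of_deleteVerts_closedNbhd
  have := hG _ _ hG₁ hG₂
  have := hcard M₁ h₁
  have := hcard M₂ h₂
  omega

theorem IsWellCovered.exists_simplicial_of_deleteVerts (hwc : IsWellCovered G) (hG : IsChordal G)
    {s t v : V} (hs : IsSimplicial G s) (ht : IsSimplicial (deleteVerts G (closedNbhd G s)) t)
    (hvt : v ∈ closedNbhd (deleteVerts G (closedNbhd G s)) t) (hvs : v ∉ closedNbhd G s) :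
    ∃ x, IsSimplicial G x ∧ v ∈ closedNbhd G x := by
  set K := closedNbhd (deleteVerts G (closedNbhd G s)) t
  by_contra! hv
  have hKs : ∀ x ∈ K, x ∉ closedNbhd G s ∧ (x = t ∨ G.Adj t x) := by
    intro x hx
    rcases mem_closedNbhd.1 hx with rfl | htx
    · refine ⟨fun hxs => hvs ?_, .inl rfl⟩
      rcases mem_closedNbhd.1 hvt with rfl | hxv
      exacts [hxs, absurd hxs hxv.2.1]
    · exact ⟨htx.2.2, .inr htx.1⟩
  have hK : G.IsClique ↑K := ht.isClique_closedNbhd.mono (deleteVerts_le _)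
  have hout : ∀ x ∈ K, ∃ z, G.Adj x z ∧ z ∉ K := by
    intro x hx
    by_contra! hin
    exact hv x (fun u hu w hw huw => hK (hin u hu) (hin w hw) huw)
      (subset_closedNbhd_of_isClique hK hx hvt)
  obtain ⟨M, hM, hMK⟩ := hG.exists_isMaxIndepSet_disjoint hK hout
  have htK : t ∈ K := self_mem_closedNbhd t
  have hst : s ≠ t := fun h => (hKs t htK).1 (h ▸ self_mem_closedNbhd s)
  have hnst : ¬ G.Adj s t := fun h => (hKs t htK).1 (mem_closedNbhd.2 (.inr h))
  have hsub : M ∩ (closedNbhd G s ∪ closedNbhd G t) ⊆ closedNbhd G s := by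
    intro m hm
    obtain ⟨hmM, hm⟩ := Finset.mem_inter.1 hm
    by_contra hms
    refine hMK m ?_ hmM
    rcases mem_closedNbhd.1 ((Finset.mem_union.1 hm).resolve_left hms) with rfl | htm
    exacts [htK, mem_closedNbhd.2 (.inr ⟨htm, (hKs t htK).1, hms⟩)]
  have := hwc.two_le_card_inter hM hst hnst
  have : (M ∩ (closedNbhd G s ∪ closedNbhd G t)).card ≤ 1 := Finset.card_le_one.2 fun x hx y hy =>
    hM.1.eq_of_mem_clique hs.isClique_closedNbhd (Finset.mem_inter.1 hx).1
      (Finset.mem_inter.1 hy).1 (hsub hx) (hsub hy)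
  omega

theorem IsWellCovered.exists_simplicial_mem_closedNbhd (hwc : IsWellCovered G)
    (hG : IsChordal G) (W : Finset V) (hW : ∀ x y, G.Adj x y → x ∈ W) (v : V) :
    ∃ s, IsSimplicial G s ∧ v ∈ closedNbhd G s := by
  induction W using Finset.strongInduction generalizing G v with
  | H W ih =>
  by_cases hiso : ∀ u, ¬ G.Adj v u
  · exact ⟨v, fun u hu => absurd hu (hiso u), self_mem_closedNbhd v⟩
  obtain ⟨u, hvu⟩ := not_forall_not.1 hiso
  obtain ⟨s, hsW, hs⟩ := hG.exists_simplicial_mem hW ⟨v, hW v u hvu⟩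
  by_cases hvs : v ∈ closedNbhd G s
  · exact ⟨s, hs, hvs⟩
  have hlt : W \ closedNbhd G s ⊂ W := Finset.ssubset_iff_subset_ne.2 ⟨Finset.sdiff_subset,
    fun h => (Finset.mem_sdiff.1 (h.symm ▸ hsW : s ∈ W \ closedNbhd G s)).2 (self_mem_closedNbhd s)⟩
  obtain ⟨t, ht, hvt⟩ := ih _ hlt (hwc.deleteVerts_closedNbhd s) (isChordal_deleteVerts hG _)
    (fun x y hxy => Finset.mem_sdiff.2 ⟨hW x y hxy.1, hxy.2.1⟩) v
  exact hwc.exists_simplicial_of_deleteVerts hG hs ht hvt hvs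

end

/-- Herzog–Hibi–Zheng (combinatorial part): a chordal graph is unmixed iff its vertex set
is the disjoint union of the facets of the clique complex admitting a free vertex. -/
theorem stmt_18 {V : Type} [Fintype V] [DecidableEq V] (G : SimpleGraph V)
    (hG : IsChordal G) :
    (∀ C D : Finset V, IsMinVertexCover G C → IsMinVertexCover G D → C.card = D.card) ↔
      (∀ v : V, ∃! F : Finset V,
        (IsMaxCliqueF G F ∧
            ∃ w ∈ F, ∀ F' : Finset V, IsMaxCliqueF G F' → w ∈ F' → F' = F) ∧
          v ∈ F) := by
  classical
  simp_rw [unmixed_iff_isWellCovered, isMaxCliqueF_with_free_vertex_iff]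
  refine ⟨fun hwc v => ?_, isWellCovered_of_existsUnique⟩
  obtain ⟨s, hs, hvs⟩ :=
    hwc.exists_simplicial_mem_closedNbhd hG Finset.univ (fun x _ _ => Finset.mem_univ x) v
  refine ⟨closedNbhd G s, ⟨⟨s, hs, rfl⟩, hvs⟩, ?_⟩
  rintro F ⟨⟨t, ht, rfl⟩, hvt⟩
  exact hwc.closedNbhd_eq ht hs hvt hvs
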